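/- In the first-price auction example with bidder values v_1 uniform on [0,5] and v_2 uniform on [7,8] (independent) and bids in {0,1,…,8}, the strategy profile b_1*(v_1) = 0 for v_1 ∈ [0, 3/2), b_1*(v_1) = 1 for v_1 ∈ [3/2, 3), b_1*(v_1) = 3 for v_1 ∈ [3, 5], and b_2*(v_2) ≡ 3, is a perfect monotone equilibrium. -/

import Mathlib

/-!
Statement 18 (Fact `claim-1st`): in the first-price auction example with bidder 1's value
uniform on [0,5], bidder 2's value uniform on [7,8] (independent), and bids in {0,1,…,8},
the cutoff profile (0 on [0,3/2), 1 on [3/2,3), 3 on [3,5]; constantly 3) is a perfect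
monotone equilibrium.
-/

open MeasureTheory Filter Metric

namespace MonotonePerfection

noncomputable section

/-- The bid space {0, 1, …, 8}. -/
abbrev Bid9 : Type := {b : ℕ // b ≤ 8}

/-- Bidder 1's value space [0, 5]. -/
abbrev TV1 : Type := ↥(Set.Icc (0:ℝ) 5)

/-- Bidder 2's value space [7, 8]. -/
abbrev TV2 : Type := ↥(Set.Icc (7:ℝ) 8)

/-- The uniform distribution on [0,5] (Lebesgue measure normalized by 1/5). -/
noncomputable def μV1 : Measure TV1 :=
  (5 : ENNReal)⁻¹ • ((volume : Measure ℝ).comap Subtype.val)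

/-- The uniform distribution on [7,8] (Lebesgue measure on an interval of length one). -/
noncomputable def μV2 : Measure TV2 := (volume : Measure ℝ).comap Subtype.val

/-- The Prohorov distance between two Borel measures. -/
noncomputable def prohorovDist {Ω : Type*} [MeasurableSpace Ω] [PseudoMetricSpace Ω]
    (μ ν : Measure Ω) : ℝ :=
  sInf {ε : ℝ |
    ∀ B : Set Ω, MeasurableSet B →
      μ B ≤ ν (Metric.thickening ε B) + ENNReal.ofReal ε ∧
      ν B ≤ μ (Metric.thickening ε B) + ENNReal.ofReal ε}

/-- A mixed strategy. -/
def IsMixed {Y X : Type*} [MeasurableSpace Y] [MeasurableSpace X]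
    (g : Y → Measure X) : Prop :=
  (∀ t, IsProbabilityMeasure (g t)) ∧
  ∀ B : Set X, MeasurableSet B → Measurable fun t => g t B

/-- A completely mixed strategy: every bid gets positive probability at every value. -/
def IsCompletelyMixed {Y X : Type*} [MeasurableSpace Y] [MeasurableSpace X]
    (g : Y → Measure X) : Prop :=
  ∀ (t : Y) (a : X), 0 < g t {a}

/-- The auction payoff of a bidder with value `v` bidding `b` against the opponent's bid
`b'`: the higher bid wins and pays its own bid; ties are broken by a fair coin. -/
noncomputable def fpay (b b' : Bid9) (v : ℝ) : ℝ :=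
  if b'.1 < b.1 then v - (b.1 : ℝ)
  else if b.1 = b'.1 then (v - (b.1 : ℝ)) / 2
  else 0

/-- Bidder 1's interim payoff. -/
noncomputable def Vfp1 (b : Bid9) (v : TV1) (g2 : TV2 → Measure Bid9) : ℝ :=
  ∫ v2 : TV2, ∫ b2, fpay b b2 (v : ℝ) ∂(g2 v2) ∂μV2

/-- Bidder 2's interim payoff. -/
noncomputable def Vfp2 (b : Bid9) (v : TV2) (g1 : TV1 → Measure Bid9) : ℝ :=
  ∫ v1 : TV1, ∫ b1, fpay b b1 (v : ℝ) ∂(g1 v1) ∂μV1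

/-- Bidder 1's best responses. -/
def BRfp1 (v : TV1) (g2 : TV2 → Measure Bid9) : Set Bid9 :=
  {b | ∀ b', Vfp1 b' v g2 ≤ Vfp1 b v g2}

/-- Bidder 2's best responses. -/
def BRfp2 (v : TV2) (g1 : TV1 → Measure Bid9) : Set Bid9 :=
  {b | ∀ b', Vfp2 b' v g1 ≤ Vfp2 b v g1}

/-- Bayesian Nash equilibrium of the first-price auction example. -/
def IsBNEfp (s1 : TV1 → Bid9) (s2 : TV2 → Bid9) : Prop :=
  (∀ᵐ v1 ∂μV1, s1 v1 ∈ BRfp1 v1 fun v => Measure.dirac (s2 v)) ∧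
  (∀ᵐ v2 ∂μV2, s2 v2 ∈ BRfp2 v2 fun v => Measure.dirac (s1 v))

/-- A perfect strategy profile of the first-price auction example. -/
def IsPerfectfp (s1 : TV1 → Bid9) (s2 : TV2 → Bid9) : Prop :=
  ∃ (G1 : ℕ → TV1 → Measure Bid9) (G2 : ℕ → TV2 → Measure Bid9),
    (∀ k, IsMixed (G1 k) ∧ IsMixed (G2 k) ∧
      IsCompletelyMixed (G1 k) ∧ IsCompletelyMixed (G2 k)) ∧
    (∀ᵐ v1 ∂μV1,
      Filter.Tendsto (fun k => prohorovDist (G1 k v1) (Measure.dirac (s1 v1)))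
        Filter.atTop (nhds 0) ∧
      Filter.Tendsto (fun k => Metric.infDist (s1 v1) (BRfp1 v1 (G2 k)))
        Filter.atTop (nhds 0)) ∧
    (∀ᵐ v2 ∂μV2,
      Filter.Tendsto (fun k => prohorovDist (G2 k v2) (Measure.dirac (s2 v2)))
        Filter.atTop (nhds 0) ∧
      Filter.Tendsto (fun k => Metric.infDist (s2 v2) (BRfp2 v2 (G1 k)))
        Filter.atTop (nhds 0))

/-- Bidder 1's cutoff strategy: bid 0 on [0, 3/2), bid 1 on [3/2, 3), bid 3 on [3, 5]. -/
noncomputable def b1star (v : TV1) : Bid9 :=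
  if (v : ℝ) < 3/2 then ⟨0, by norm_num⟩
  else if (v : ℝ) < 3 then ⟨1, by norm_num⟩
  else ⟨3, by norm_num⟩

/-- Bidder 2's constant strategy: always bid 3. -/
noncomputable def b2star (_ : TV2) : Bid9 := ⟨3, by norm_num⟩


noncomputable def uMeas : Measure Bid9 :=
  (9:ENNReal)⁻¹ • (Measure.dirac ⟨0, by norm_num⟩ + Measure.dirac ⟨1, by norm_num⟩ + Measure.dirac ⟨2, by norm_num⟩ + Measure.dirac ⟨3, by norm_num⟩ + Measure.dirac ⟨4, by norm_num⟩ + Measure.dirac ⟨5, by norm_num⟩ + Measure.dirac ⟨6, by norm_num⟩ + Measure.dirac ⟨7, by norm_num⟩ + Measure.dirac ⟨8, by norm_num⟩)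

instance : IsProbabilityMeasure uMeas := by
  constructor
  simp [uMeas]
  rw [show ((9:ENNReal)⁻¹+9⁻¹+9⁻¹+9⁻¹+9⁻¹+9⁻¹+9⁻¹+9⁻¹+9⁻¹ : ENNReal) = 9 * 9⁻¹ by ring,
    ENNReal.mul_inv_cancel (by norm_num) (by norm_num)]

lemma integral_uMeas (f : Bid9 → ℝ) : ∫ b, f b ∂uMeas =
    (f ⟨0, by norm_num⟩ + f ⟨1, by norm_num⟩ + f ⟨2, by norm_num⟩ + f ⟨3, by norm_num⟩ + f ⟨4, by norm_num⟩ + f ⟨5, by norm_num⟩ + f ⟨6, by norm_num⟩ + f ⟨7, by norm_num⟩ + f ⟨8, by norm_num⟩) / 9 := by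
  rw [uMeas, integral_smul_measure]
  rw [integral_add_measure (.of_finite) (.of_finite), integral_add_measure (.of_finite) (.of_finite),
      integral_add_measure (.of_finite) (.of_finite), integral_add_measure (.of_finite) (.of_finite),
      integral_add_measure (.of_finite) (.of_finite), integral_add_measure (.of_finite) (.of_finite),
      integral_add_measure (.of_finite) (.of_finite), integral_add_measure (.of_finite) (.of_finite)]
  simp only [integral_dirac]
  rw [ENNReal.toReal_inv]
  norm_num
  ring

/-- the perturbed strategy measure -/
noncomputable def mixM (ε : ℝ) (a : Bid9) : Measure Bid9 :=
  ENNReal.ofReal (1-ε) • Measure.dirac a + ENNReal.ofReal ε • uMeas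

lemma mixM_zero (a : Bid9) : mixM 0 a = Measure.dirac a := by
  simp [mixM]

lemma isProb_mixM {ε : ℝ} (hε0 : 0 ≤ ε) (hε1 : ε ≤ 1) (a : Bid9) :
    IsProbabilityMeasure (mixM ε a) := by
  constructor
  simp [mixM]
  rw [← ENNReal.ofReal_add (by linarith) hε0]
  norm_num

lemma integrable_mixM (ε : ℝ) (a : Bid9) (f : Bid9 → ℝ) : Integrable f (mixM ε a) := by
  unfold mixM
  exact Integrable.add_measure
    ((Integrable.of_finite).smul_measure ENNReal.ofReal_ne_top)
    ((Integrable.of_finite).smul_measure ENNReal.ofReal_ne_top)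

lemma integral_mixM {ε : ℝ} (hε0 : 0 ≤ ε) (hε1 : ε ≤ 1) (a : Bid9) (f : Bid9 → ℝ) :
    ∫ b, f b ∂(mixM ε a) = (1-ε) * f a + ε * ((f ⟨0, by norm_num⟩ + f ⟨1, by norm_num⟩ + f ⟨2, by norm_num⟩ + f ⟨3, by norm_num⟩ + f ⟨4, by norm_num⟩ + f ⟨5, by norm_num⟩ + f ⟨6, by norm_num⟩ + f ⟨7, by norm_num⟩ + f ⟨8, by norm_num⟩) / 9) := by
  unfold mixM
  rw [integral_add_measure ((Integrable.of_finite).smul_measure ENNReal.ofReal_ne_top)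
    ((Integrable.of_finite).smul_measure ENNReal.ofReal_ne_top),
    integral_smul_measure, integral_smul_measure, integral_dirac, integral_uMeas,
    ENNReal.toReal_ofReal (by linarith), ENNReal.toReal_ofReal hε0]
  simp only [smul_eq_mul]
  try ring
lemma comap_apply1 (S : Set TV1) :
    (volume : Measure ℝ).comap Subtype.val S = volume (Subtype.val '' S) :=
  MeasurableEmbedding.comap_apply (MeasurableEmbedding.subtype_coe measurableSet_Icc) volume S

lemma comap_apply2 (S : Set TV2) :
    (volume : Measure ℝ).comap Subtype.val S = volume (Subtype.val '' S) :=
  MeasurableEmbedding.comap_apply (MeasurableEmbedding.subtype_coe measurableSet_Icc) volume S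

lemma inv5 : (5 : ENNReal)⁻¹ = ENNReal.ofReal (1/5) := by
  rw [show (1:ℝ)/5 = (5:ℝ)⁻¹ by norm_num, ENNReal.ofReal_inv_of_pos (by norm_num)]
  norm_num

instance : IsProbabilityMeasure μV2 := by
  constructor
  rw [μV2, comap_apply2, Subtype.coe_image_univ, Real.volume_Icc]
  norm_num

instance : IsProbabilityMeasure μV1 := by
  constructor
  rw [μV1, Measure.smul_apply, comap_apply1, Subtype.coe_image_univ, Real.volume_Icc, smul_eq_mul,
    inv5, ← ENNReal.ofReal_mul (by norm_num)]
  norm_num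

lemma μV1_lt (c : ℝ) (h0 : 0 ≤ c) (h5 : c ≤ 5) : μV1 {t : TV1 | (t:ℝ) < c} = ENNReal.ofReal (c/5) := by
  rw [μV1, Measure.smul_apply, comap_apply1]
  have : Subtype.val '' {t : TV1 | (t:ℝ) < c} = Set.Ico (0:ℝ) c := by
    ext x
    simp only [Set.mem_image, Set.mem_Ico, Set.mem_setOf_eq]
    constructor
    · rintro ⟨⟨y, hy⟩, h2, rfl⟩; exact ⟨hy.1, h2⟩
    · rintro ⟨h1, h3⟩; exact ⟨⟨x, h1, by linarith⟩, h3, rfl⟩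
  rw [this, Real.volume_Ico, smul_eq_mul, inv5, ← ENNReal.ofReal_mul (by norm_num)]
  ring_nf

lemma μV1_seg (c d : ℝ) (h0 : 0 ≤ c) (h5 : d ≤ 5) :
    μV1 {t : TV1 | c ≤ (t:ℝ) ∧ (t:ℝ) < d} = ENNReal.ofReal ((d-c)/5) := by
  rw [μV1, Measure.smul_apply, comap_apply1]
  have : Subtype.val '' {t : TV1 | c ≤ (t:ℝ) ∧ (t:ℝ) < d} = Set.Ico c d := by
    ext x
    simp only [Set.mem_image, Set.mem_Ico, Set.mem_setOf_eq]
    constructor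
    · rintro ⟨⟨y, hy⟩, h2, rfl⟩; exact h2
    · rintro ⟨h1, h3⟩; exact ⟨⟨x, by linarith, by linarith⟩, ⟨h1, h3⟩, rfl⟩
  rw [this, Real.volume_Ico, smul_eq_mul, inv5, ← ENNReal.ofReal_mul (by norm_num)]
  ring_nf

lemma μV1_ge (c : ℝ) (h0 : 0 ≤ c) : μV1 {t : TV1 | c ≤ (t:ℝ)} = ENNReal.ofReal ((5-c)/5) := by
  rw [μV1, Measure.smul_apply, comap_apply1]
  have : Subtype.val '' {t : TV1 | c ≤ (t:ℝ)} = Set.Icc c 5 := by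
    ext x
    simp only [Set.mem_image, Set.mem_Icc, Set.mem_setOf_eq]
    constructor
    · rintro ⟨⟨y, hy⟩, h2, rfl⟩; exact ⟨h2, hy.2⟩
    · rintro ⟨h1, h3⟩; exact ⟨⟨x, by linarith, h3⟩, h1, rfl⟩
  rw [this, Real.volume_Icc, smul_eq_mul, inv5, ← ENNReal.ofReal_mul (by norm_num)]
  ring_nf

lemma μV1_eq_zero (c : ℝ) : μV1 {t : TV1 | (t:ℝ) = c} = 0 := by
  rw [μV1, Measure.smul_apply, comap_apply1]
  have h : Subtype.val '' {t : TV1 | (t:ℝ) = c} ⊆ {c} := by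
    rintro x ⟨⟨y, hy⟩, h2, rfl⟩; simpa using h2
  rw [measure_mono_null h Real.volume_singleton]
  simp

lemma μV2_eq_zero (c : ℝ) : μV2 {t : TV2 | (t:ℝ) = c} = 0 := by
  rw [μV2, comap_apply2]
  have h : Subtype.val '' {t : TV2 | (t:ℝ) = c} ⊆ {c} := by
    rintro x ⟨⟨y, hy⟩, h2, rfl⟩; simpa using h2
  exact measure_mono_null h Real.volume_singleton

lemma measurable_setV1_lt (c : ℝ) : MeasurableSet {t : TV1 | (t:ℝ) < c} :=
  measurable_subtype_coe measurableSet_Iio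

lemma measurable_setV1_seg (c d : ℝ) : MeasurableSet {t : TV1 | c ≤ (t:ℝ) ∧ (t:ℝ) < d} :=
  measurable_subtype_coe (measurableSet_Ico : MeasurableSet (Set.Ico c d))

lemma measurable_setV1_ge (c : ℝ) : MeasurableSet {t : TV1 | c ≤ (t:ℝ)} :=
  measurable_subtype_coe measurableSet_Ici

/-- a step function integral over μV1 -/
lemma integral_step (A B C : ℝ) :
    ∫ t : TV1, (if (t:ℝ) < 3/2 then A else if (t:ℝ) < 3 then B else C) ∂μV1
      = (3/10)*A + (3/10)*B + (2/5)*C := by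
  have hA : Integrable (fun t : TV1 => {t : TV1 | (t:ℝ) < 3/2}.indicator (fun _ => A) t) μV1 :=
    (integrable_const A).indicator (measurable_setV1_lt (3/2))
  have hB : Integrable (fun t : TV1 => {t : TV1 | 3/2 ≤ (t:ℝ) ∧ (t:ℝ) < 3}.indicator (fun _ => B) t) μV1 :=
    (integrable_const B).indicator (measurable_setV1_seg (3/2) 3)
  have hC : Integrable (fun t : TV1 => {t : TV1 | 3 ≤ (t:ℝ)}.indicator (fun _ => C) t) μV1 :=
    (integrable_const C).indicator (measurable_setV1_ge 3)
  have hAB : Integrable (fun t : TV1 => {t : TV1 | (t:ℝ) < 3/2}.indicator (fun _ => A) t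
      + {t : TV1 | 3/2 ≤ (t:ℝ) ∧ (t:ℝ) < 3}.indicator (fun _ => B) t) μV1 := hA.add hB
  have hfun : (fun t : TV1 => (if (t:ℝ) < 3/2 then A else if (t:ℝ) < 3 then B else C))
      = fun t : TV1 =>
        ({t : TV1 | (t:ℝ) < 3/2}.indicator (fun _ => A) t
        + {t : TV1 | 3/2 ≤ (t:ℝ) ∧ (t:ℝ) < 3}.indicator (fun _ => B) t)
        + {t : TV1 | 3 ≤ (t:ℝ)}.indicator (fun _ => C) t := by
    funext t
    rcases lt_or_ge (t:ℝ) (3/2) with h | h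
    · have h2 : (t:ℝ) < 3 := by linarith
      have h3 : ¬((3:ℝ) ≤ (t:ℝ)) := by linarith
      have h4 : ¬((3:ℝ)/2 ≤ (t:ℝ) ∧ (t:ℝ) < 3) := fun hc => absurd hc.1 (by linarith)
      simp [Set.indicator_apply, h, h2, h3, h4]
    · rcases lt_or_ge (t:ℝ) 3 with h2 | h2
      · have h3 : ¬((3:ℝ) ≤ (t:ℝ)) := by linarith
        simp [Set.indicator_apply, not_lt.mpr h, h, h2, h3]
      · have h4 : ¬((3:ℝ)/2 ≤ (t:ℝ) ∧ (t:ℝ) < 3) := fun hc => absurd hc.2 (by linarith)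
        simp [Set.indicator_apply, not_lt.mpr h, not_lt.mpr (by linarith : (3:ℝ) ≤ (t:ℝ)), h2, h4]
  rw [hfun, integral_add hAB hC, integral_add hA hB,
    integral_indicator_const A (measurable_setV1_lt (3/2)),
    integral_indicator_const B (measurable_setV1_seg (3/2) 3),
    integral_indicator_const C (measurable_setV1_ge 3),
    measureReal_def, measureReal_def, measureReal_def,
    μV1_lt (3/2) (by norm_num) (by norm_num), μV1_seg (3/2) 3 (by norm_num) (by norm_num),
    μV1_ge 3 (by norm_num)]
  rw [ENNReal.toReal_ofReal (by norm_num), ENNReal.toReal_ofReal (by norm_num),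
    ENNReal.toReal_ofReal (by norm_num)]
  simp only [smul_eq_mul]
  ring
/-- the sum of payoffs against all 9 bids -/
noncomputable def fsum (b : Bid9) (v : ℝ) : ℝ :=
  fpay b ⟨0, by norm_num⟩ v + fpay b ⟨1, by norm_num⟩ v + fpay b ⟨2, by norm_num⟩ v
  + fpay b ⟨3, by norm_num⟩ v + fpay b ⟨4, by norm_num⟩ v + fpay b ⟨5, by norm_num⟩ v
  + fpay b ⟨6, by norm_num⟩ v + fpay b ⟨7, by norm_num⟩ v + fpay b ⟨8, by norm_num⟩ v

lemma Vfp1_mix {ε : ℝ} (hε0 : 0 ≤ ε) (hε1 : ε ≤ 1) (b : Bid9) (v : TV1) :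
    Vfp1 b v (fun _ => mixM ε ⟨3, by norm_num⟩)
      = (1-ε) * fpay b ⟨3, by norm_num⟩ ↑v + ε * (fsum b ↑v / 9) := by
  unfold Vfp1
  simp only [integral_mixM hε0 hε1]
  rw [integral_const]
  simp [fsum]

lemma Vfp2_mix {ε : ℝ} (hε0 : 0 ≤ ε) (hε1 : ε ≤ 1) (b : Bid9) (v : TV2) :
    Vfp2 b v (fun t => mixM ε (b1star t))
      = (1-ε) * ((3/10) * fpay b ⟨0, by norm_num⟩ ↑v + (3/10) * fpay b ⟨1, by norm_num⟩ ↑v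
          + (2/5) * fpay b ⟨3, by norm_num⟩ ↑v) + ε * (fsum b ↑v / 9) := by
  unfold Vfp2
  simp only [integral_mixM hε0 hε1]
  have hfun : (fun v1 : TV1 => (1-ε) * fpay b (b1star v1) ↑v + ε * ((fpay b ⟨0, by norm_num⟩ ↑v + fpay b ⟨1, by norm_num⟩ ↑v + fpay b ⟨2, by norm_num⟩ ↑v + fpay b ⟨3, by norm_num⟩ ↑v + fpay b ⟨4, by norm_num⟩ ↑v + fpay b ⟨5, by norm_num⟩ ↑v + fpay b ⟨6, by norm_num⟩ ↑v + fpay b ⟨7, by norm_num⟩ ↑v + fpay b ⟨8, by norm_num⟩ ↑v) / 9))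
      = fun v1 : TV1 =>
        (if (v1:ℝ) < 3/2 then (1-ε) * fpay b ⟨0, by norm_num⟩ ↑v + ε * (fsum b ↑v / 9)
         else if (v1:ℝ) < 3 then (1-ε) * fpay b ⟨1, by norm_num⟩ ↑v + ε * (fsum b ↑v / 9)
         else (1-ε) * fpay b ⟨3, by norm_num⟩ ↑v + ε * (fsum b ↑v / 9)) := by
    funext t
    unfold b1star fsum
    split_ifs <;> rfl
  rw [hfun, integral_step]
  ring
lemma BR1_low {ε : ℝ} (hε0 : 0 ≤ ε) (hε1 : ε ≤ 1) (v : TV1) (hv : (v:ℝ) ≤ 3/2) :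
    (⟨0, by norm_num⟩ : Bid9) ∈ BRfp1 v (fun _ => mixM ε ⟨3, by norm_num⟩) := by
  intro b'
  rw [Vfp1_mix hε0 hε1, Vfp1_mix hε0 hε1]
  have h0 : (0:ℝ) ≤ (v:ℝ) := v.2.1
  obtain ⟨n, hn⟩ := b'
  interval_cases n <;> norm_num [fsum, fpay] <;> nlinarith [v.2.2]

lemma BR1_mid {ε : ℝ} (hε0 : 0 ≤ ε) (hε1 : ε ≤ 1) (v : TV1) (hv1 : 3/2 ≤ (v:ℝ))
    (hv2 : (v:ℝ) ≤ 3) :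
    (⟨1, by norm_num⟩ : Bid9) ∈ BRfp1 v (fun _ => mixM ε ⟨3, by norm_num⟩) := by
  intro b'
  rw [Vfp1_mix hε0 hε1, Vfp1_mix hε0 hε1]
  obtain ⟨n, hn⟩ := b'
  interval_cases n <;> norm_num [fsum, fpay] <;> nlinarith [v.2.2, v.2.1]

lemma BR1_high {ε : ℝ} (hε0 : 0 ≤ ε) (v : TV1) (hv1 : 3 ≤ (v:ℝ))
    (hε : ε ≤ ((v:ℝ) - 3)/10) :
    (⟨3, by norm_num⟩ : Bid9) ∈ BRfp1 v (fun _ => mixM ε ⟨3, by norm_num⟩) := by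
  have hv2 : (v:ℝ) ≤ 5 := v.2.2
  have hε1 : ε ≤ 1 := by linarith
  intro b'
  rw [Vfp1_mix hε0 hε1, Vfp1_mix hε0 hε1]
  obtain ⟨n, hn⟩ := b'
  interval_cases n <;> norm_num [fsum, fpay] <;> nlinarith

lemma BR2 {ε : ℝ} (hε0 : 0 ≤ ε) (v : TV2) (hε : ε ≤ (8 - (v:ℝ))/100) :
    (⟨3, by norm_num⟩ : Bid9) ∈ BRfp2 v (fun t => mixM ε (b1star t)) := by
  have hv1 : 7 ≤ (v:ℝ) := v.2.1
  have hv2 : (v:ℝ) ≤ 8 := v.2.2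
  have hε1 : ε ≤ 1 := by linarith
  intro b'
  rw [Vfp2_mix hε0 hε1, Vfp2_mix hε0 hε1]
  obtain ⟨n, hn⟩ := b'
  interval_cases n <;> norm_num [fsum, fpay] <;> nlinarith
lemma mono_b1star : Monotone b1star := by
  intro s t hst
  unfold b1star
  have h : (s:ℝ) ≤ (t:ℝ) := hst
  split_ifs <;> simp [Subtype.mk_le_mk] <;> linarith

lemma measurable_b1star : Measurable b1star := by
  unfold b1star
  exact Measurable.ite (measurable_setV1_lt (3/2)) measurable_const
    (Measurable.ite (measurable_setV1_lt 3) measurable_const measurable_const)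

lemma isMixed_mixM {Y : Type} [MeasurableSpace Y] {ε : ℝ} (hε0 : 0 < ε) (hε1 : ε ≤ 1)
    (s : Y → Bid9) (hs : Measurable s) : IsMixed (fun t => mixM ε (s t)) := by
  constructor
  · exact fun t => isProb_mixM hε0.le hε1 (s t)
  · intro B hB
    have : (fun t => mixM ε (s t) B)
        = fun t => ENNReal.ofReal (1-ε) * (B.indicator (fun _ => (1:ENNReal)) (s t))
            + ENNReal.ofReal ε * uMeas B := by
      funext t
      rw [mixM, Measure.add_apply, Measure.smul_apply, Measure.smul_apply,
        Measure.dirac_apply' _ hB]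
      rfl
    rw [this]
    exact (((Measurable.of_discrete (f := fun x : Bid9 => B.indicator (fun _ => (1:ENNReal)) x)).comp
      hs).const_mul _).add_const _

lemma uMeas_pos (a : Bid9) : 0 < uMeas {a} := by
  obtain ⟨n, hn⟩ := a
  rw [uMeas]
  interval_cases n <;>
    simp [Measure.dirac_apply', Set.indicator_apply, Subtype.ext_iff] <;> norm_num

lemma completelyMixed_mixM {Y : Type} [MeasurableSpace Y] {ε : ℝ} (hε0 : 0 < ε)
    (s : Y → Bid9) : IsCompletelyMixed (fun t => mixM ε (s t)) := by
  intro t a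
  simp only [mixM, Measure.add_apply]
  have h2 : 0 < ENNReal.ofReal ε * uMeas {a} :=
    ENNReal.mul_pos (by simpa using (ENNReal.ofReal_pos.mpr hε0).ne') (uMeas_pos a).ne'
  calc 0 < ENNReal.ofReal ε * uMeas {a} := h2
    _ = (ENNReal.ofReal ε • uMeas) {a} := rfl
    _ ≤ _ := le_add_self

lemma prohorov_mem {ε : ℝ} (hε0 : 0 < ε) (hε1 : ε ≤ 1) (a : Bid9) :
    ε ∈ {ε' : ℝ | ∀ B : Set Bid9, MeasurableSet B →
      mixM ε a B ≤ Measure.dirac a (Metric.thickening ε' B) + ENNReal.ofReal ε' ∧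
      Measure.dirac a B ≤ mixM ε a (Metric.thickening ε' B) + ENNReal.ofReal ε'} := by
  intro B hB
  haveI := isProb_mixM hε0.le hε1 a
  constructor
  · have h1 : mixM ε a B ≤ Measure.dirac a B + ENNReal.ofReal ε := by
      rw [mixM, Measure.add_apply, Measure.smul_apply, Measure.smul_apply, smul_eq_mul, smul_eq_mul]
      gcongr
      · calc ENNReal.ofReal (1-ε) * Measure.dirac a B ≤ 1 * Measure.dirac a B := by
              gcongr
              exact ENNReal.ofReal_le_one.mpr (by linarith)
          _ = Measure.dirac a B := one_mul _
      · calc ENNReal.ofReal ε * uMeas B ≤ ENNReal.ofReal ε * 1 := by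
              gcongr; exact prob_le_one
          _ = ENNReal.ofReal ε := mul_one _
    exact h1.trans (add_le_add_left (measure_mono (Metric.self_subset_thickening hε0 B)) _)
  · by_cases ha : a ∈ B
    · have h2 : ENNReal.ofReal (1-ε) ≤ mixM ε a (Metric.thickening ε B) := by
        rw [mixM, Measure.add_apply, Measure.smul_apply, smul_eq_mul]
        calc ENNReal.ofReal (1-ε) = ENNReal.ofReal (1-ε) * Measure.dirac a (Metric.thickening ε B) := by
              rw [Measure.dirac_apply_of_mem (Metric.self_subset_thickening hε0 B ha), mul_one]
          _ ≤ _ := le_add_right le_rfl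
      calc Measure.dirac a B ≤ 1 := prob_le_one
        _ = ENNReal.ofReal (1-ε) + ENNReal.ofReal ε := by
            rw [← ENNReal.ofReal_add (by linarith) hε0.le]; norm_num
        _ ≤ _ := by gcongr
    · rw [Measure.dirac_apply' _ hB, Set.indicator_of_notMem ha]
      exact zero_le

lemma prohorov_le {ε : ℝ} (hε0 : 0 < ε) (hε1 : ε ≤ 1) (a : Bid9) :
    prohorovDist (mixM ε a) (Measure.dirac a) ≤ ε ∧
    0 ≤ prohorovDist (mixM ε a) (Measure.dirac a) := by
  haveI := isProb_mixM hε0.le hε1 a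
  have hpos : ∀ ε' ∈ {ε' : ℝ | ∀ B : Set Bid9, MeasurableSet B →
      mixM ε a B ≤ Measure.dirac a (Metric.thickening ε' B) + ENNReal.ofReal ε' ∧
      Measure.dirac a B ≤ mixM ε a (Metric.thickening ε' B) + ENNReal.ofReal ε'}, (0:ℝ) ≤ ε' := by
    intro ε' hε'
    by_contra hneg
    push_neg at hneg
    have := (hε' Set.univ MeasurableSet.univ).1
    rw [Metric.thickening_of_nonpos hneg.le, ENNReal.ofReal_eq_zero.mpr hneg.le,
      measure_empty, measure_univ] at this
    simp at this
  constructor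
  · exact csInf_le ⟨0, hpos⟩ (prohorov_mem hε0 hε1 a)
  · exact le_csInf ⟨ε, prohorov_mem hε0 hε1 a⟩ hpos

lemma ae_ne3 : ∀ᵐ (v1 : TV1) ∂μV1, (v1:ℝ) ≠ 3 := by
  rw [ae_iff]
  have h : {v1 : TV1 | ¬ (v1:ℝ) ≠ 3} = {v1 : TV1 | (v1:ℝ) = 3} := by
    ext t; simp
  rw [h]; exact μV1_eq_zero 3

lemma ae_ne8 : ∀ᵐ (v2 : TV2) ∂μV2, (v2:ℝ) ≠ 8 := by
  rw [ae_iff]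
  have h : {v2 : TV2 | ¬ (v2:ℝ) ≠ 8} = {v2 : TV2 | (v2:ℝ) = 8} := by
    ext t; simp
  rw [h]; exact μV2_eq_zero 8

lemma eps_pos (k : ℕ) : 0 < 1/((k:ℝ)+1) := by positivity

lemma eps_le_one (k : ℕ) : 1/((k:ℝ)+1) ≤ 1 := by
  rw [div_le_one (by positivity)]
  linarith [(Nat.cast_nonneg k : (0:ℝ) ≤ k)]

/-- **Fact.**  The profile (b1star, b2star) is a perfect monotone equilibrium of the
first-price auction example. -/
theorem firstPriceExample_perfect_monotone_equilibrium :
    Monotone b1star ∧ Monotone b2star ∧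
    IsBNEfp b1star b2star ∧ IsPerfectfp b1star b2star := by
  have hg2 : (fun v2 : TV2 => Measure.dirac (b2star v2))
      = fun _ : TV2 => mixM 0 ⟨3, by norm_num⟩ := by
    funext v2; rw [mixM_zero]; rfl
  have hg1 : (fun v1 : TV1 => Measure.dirac (b1star v1))
      = fun v1 : TV1 => mixM 0 (b1star v1) := by
    funext v1; rw [mixM_zero]
  refine ⟨mono_b1star, fun a b _ => le_rfl, ⟨?_, ?_⟩, ?_⟩
  · -- bidder 1 best responds
    refine ae_of_all _ fun v => ?_
    rw [hg2]
    rcases lt_or_ge (v:ℝ) (3/2) with h | h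
    · have hb : b1star v = ⟨0, by norm_num⟩ := by unfold b1star; rw [if_pos h]
      rw [hb]; exact BR1_low le_rfl zero_le_one v h.le
    · rcases lt_or_ge (v:ℝ) 3 with h2 | h2
      · have hb : b1star v = ⟨1, by norm_num⟩ := by
          unfold b1star; rw [if_neg (not_lt.mpr h), if_pos h2]
        rw [hb]; exact BR1_mid le_rfl zero_le_one v h h2.le
      · have hb : b1star v = ⟨3, by norm_num⟩ := by
          unfold b1star; rw [if_neg (not_lt.mpr (by linarith)), if_neg (not_lt.mpr h2)]
        rw [hb]; exact BR1_high le_rfl v h2 (by linarith)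
  · -- bidder 2 best responds
    refine ae_of_all _ fun v => ?_
    rw [hg1]
    exact BR2 le_rfl v (by linarith [v.2.2])
  · -- perfection
    refine ⟨fun k t => mixM (1/((k:ℝ)+1)) (b1star t),
      fun k t => mixM (1/((k:ℝ)+1)) (b2star t), fun k => ?_, ?_, ?_⟩
    · exact ⟨isMixed_mixM (eps_pos k) (eps_le_one k) b1star measurable_b1star,
        isMixed_mixM (eps_pos k) (eps_le_one k) b2star measurable_const,
        completelyMixed_mixM (eps_pos k) b1star,
        completelyMixed_mixM (eps_pos k) b2star⟩
    · filter_upwards [ae_ne3] with v hv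
      constructor
      · exact squeeze_zero (fun k => (prohorov_le (eps_pos k) (eps_le_one k) (b1star v)).2)
          (fun k => (prohorov_le (eps_pos k) (eps_le_one k) (b1star v)).1)
          tendsto_one_div_add_atTop_nhds_zero_nat
      · have hmem : ∀ᶠ (k : ℕ) in atTop,
            b1star v ∈ BRfp1 v (fun t : TV2 => mixM (1/((k:ℝ)+1)) (b2star t)) := by
          rcases lt_or_ge (v:ℝ) (3/2) with h | h
          · have hb : b1star v = ⟨0, by norm_num⟩ := by unfold b1star; rw [if_pos h]
            exact Filter.Eventually.of_forall fun k => by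
              rw [hb]; exact BR1_low (eps_pos k).le (eps_le_one k) v h.le
          · rcases lt_or_ge (v:ℝ) 3 with h2 | h2
            · have hb : b1star v = ⟨1, by norm_num⟩ := by
                unfold b1star; rw [if_neg (not_lt.mpr h), if_pos h2]
              exact Filter.Eventually.of_forall fun k => by
                rw [hb]; exact BR1_mid (eps_pos k).le (eps_le_one k) v h h2.le
            · have hb : b1star v = ⟨3, by norm_num⟩ := by
                unfold b1star; rw [if_neg (not_lt.mpr (by linarith)), if_neg (not_lt.mpr h2)]
              have h3 : (3:ℝ) < (v:ℝ) := lt_of_le_of_ne h2 (Ne.symm hv)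
              have hev := tendsto_one_div_add_atTop_nhds_zero_nat.eventually
                (eventually_le_nhds (show (0:ℝ) < ((v:ℝ)-3)/10 by linarith))
              exact hev.mono fun k hk => by
                rw [hb]; exact BR1_high (eps_pos k).le v h2 hk
        refine Tendsto.congr' ?_ tendsto_const_nhds
        exact hmem.mono fun k hk => (Metric.infDist_zero_of_mem hk).symm
    · filter_upwards [ae_ne8] with v hv
      constructor
      · exact squeeze_zero (fun k => (prohorov_le (eps_pos k) (eps_le_one k) (b2star v)).2)
          (fun k => (prohorov_le (eps_pos k) (eps_le_one k) (b2star v)).1)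
          tendsto_one_div_add_atTop_nhds_zero_nat
      · have h8 : (v:ℝ) < 8 := lt_of_le_of_ne v.2.2 hv
        have hev := tendsto_one_div_add_atTop_nhds_zero_nat.eventually
          (eventually_le_nhds (show (0:ℝ) < (8-(v:ℝ))/100 by linarith))
        have hmem : ∀ᶠ (k : ℕ) in atTop,
            b2star v ∈ BRfp2 v (fun t : TV1 => mixM (1/((k:ℝ)+1)) (b1star t)) :=
          hev.mono fun k hk => BR2 (eps_pos k).le v hk
        refine Tendsto.congr' ?_ tendsto_const_nhds
        exact hmem.mono fun k hk => (Metric.infDist_zero_of_mem hk).symm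

end

end MonotonePerfection
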